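/- Jet fibers of the node: Let k be a field of characteristic zero, m ≥ 1, and consider the polynomial ring k[x₀,…,x_m, y₀,…,y_m] in 2(m+1) variables. Let J be the ideal generated by x₀, y₀, and the polynomials c_l = Σ_{a+b=l} x_a·y_b for 0 ≤ l ≤ m. Then the radical of J equals the intersection, over all pairs (i, j) with i, j ≥ 1 and i + j = m + 1, of the ideals (x₀, …, x_{i−1}, y₀, …, y_{j−1}); in particular PrimeSpectrum of the quotient ring (the fiber of the m-th jet scheme of the node xy = 0 over the origin) has exactly m irreducible components. -/

import Mathlib

/-!
Every prime `q ⊇ J` contains `x₀`, `y₀` and every product `x_a y_b` with `a + b ≤ m`: such a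
product is nilpotent modulo `J`, because multiplying `c_{a+b}` by `x_a y_b` leaves `(x_a y_b)²`
plus terms that are already nilpotent by induction on `a + b`. If `i + 1` is the first index with
`x_{i+1} ∉ q`, primality then forces `y_b ∈ q` for `i + b < m`, so `q` contains the monomial prime
`(x₀, …, x_i, y₀, …, y_{m-i-1})`. These `m` primes contain `J` and are pairwise incomparable, so
they are exactly the minimal primes over `J`.
-/

open MvPolynomial

namespace Ideal

variable {R : Type*} [CommRing R]

theorem mul_mem_radical_of_sum_range_mul_mem {I : Ideal R} {x y : ℕ → R} {m : ℕ}
    (hc : ∀ l ≤ m, ∑ a ∈ Finset.range (l + 1), x a * y (l - a) ∈ I) :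
    ∀ a b, a + b ≤ m → x a * y b ∈ I.radical := by
  suffices ∀ l ≤ m, ∀ a b, a + b = l → x a * y b ∈ I.radical from
    fun a b hab => this (a + b) hab a b rfl
  intro l
  induction l using Nat.strong_induction_on with
  | _ l ih =>
  intro hl a b hab
  have ha : a ∈ Finset.range (l + 1) := Finset.mem_range.mpr (by omega)
  have hprod : x a * y b * ∑ a' ∈ Finset.range (l + 1), x a' * y (l - a') ∈ I.radical :=
    I.radical.mul_mem_left _ (I.le_radical (hc l hl))
  have hcross : ∑ a' ∈ (Finset.range (l + 1)).erase a, x a * y b * (x a' * y (l - a')) ∈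
      I.radical := by
    refine I.radical.sum_mem fun a' ha' => ?_
    have hal : a' < l + 1 := Finset.mem_range.mp (Finset.mem_of_mem_erase ha')
    rcases lt_or_gt_of_ne (Finset.ne_of_mem_erase ha') with h | h
    · rw [show x a * y b * (x a' * y (l - a')) = x a' * y b * (x a * y (l - a')) by ring]
      exact I.radical.mul_mem_right _ (ih (a' + b) (by omega) (by omega) a' b rfl)
    · rw [show x a * y b * (x a' * y (l - a')) = x a * y (l - a') * (x a' * y b) by ring]
      exact I.radical.mul_mem_right _ (ih (a + (l - a')) (by omega) (by omega) a _ rfl)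
  rw [Finset.mul_sum, ← Finset.sum_erase_add _ _ ha, Submodule.add_mem_iff_right _ hcross,
    show l - a = b by omega, ← pow_two] at hprod
  exact radical_idem I ▸ ⟨2, hprod⟩

theorem IsPrime.exists_forall_mem_of_mul_mem {q : Ideal R} (hq : q.IsPrime) {x y : ℕ → R}
    {m : ℕ} (hm : 1 ≤ m) (hx : x 0 ∈ q) (hy : y 0 ∈ q)
    (hxy : ∀ a b, a + b ≤ m → x a * y b ∈ q) :
    ∃ i < m, (∀ a ≤ i, x a ∈ q) ∧ ∀ b, i + b < m → y b ∈ q := by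
  classical
  -- `Nat.find hex + 1` is the first index with `x (n + 1) ∉ q`, capped at `m`.
  have hex : ∃ n, x (n + 1) ∉ q ∨ n + 1 = m := ⟨m - 1, Or.inr (by omega)⟩
  have hmin : ∀ n < Nat.find hex, x (n + 1) ∈ q := fun n hn =>
    not_not.mp (not_or.mp (Nat.find_min hex hn)).1
  refine ⟨Nat.find hex, ?_, ?_, ?_⟩
  · have := Nat.find_min' hex (Or.inr (show m - 1 + 1 = m by omega))
    rcases Nat.find_spec hex with h | h <;> omega
  · rintro (_ | a) ha
    exacts [hx, hmin a ha]
  · intro b hb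
    rcases Nat.find_spec hex with h | h
    · exact (hq.mem_or_mem (hxy _ b (by omega))).resolve_left h
    · obtain rfl : b = 0 := by omega
      exact hy

variable {ι : Type*} {J : Ideal R} {P : ι → Ideal R}

theorem radical_eq_iInf_of_forall_exists_le (hP : ∀ i, (P i).IsPrime) (hJ : ∀ i, J ≤ P i)
    (hcover : ∀ q : Ideal R, q.IsPrime → J ≤ q → ∃ i, P i ≤ q) :
    J.radical = ⨅ i, P i := by
  refine le_antisymm (le_iInf fun i => (hP i).radical_le_iff.mpr (hJ i)) ?_
  rw [radical_eq_sInf]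
  refine le_sInf fun q ⟨hJq, hq⟩ => ?_
  obtain ⟨i, hi⟩ := hcover q hq hJq
  exact (iInf_le P i).trans hi

theorem minimalPrimes_eq_range_of_forall_exists_le (hP : ∀ i, (P i).IsPrime)
    (hJ : ∀ i, J ≤ P i) (hcover : ∀ q : Ideal R, q.IsPrime → J ≤ q → ∃ i, P i ≤ q)
    (hanti : ∀ i i', P i ≤ P i' → P i = P i') :
    J.minimalPrimes = Set.range P := by
  ext q
  constructor
  · intro hq
    obtain ⟨i, hi⟩ := hcover q hq.isPrime hq.le
    exact ⟨i, le_antisymm hi (hq.2 ⟨hP i, hJ i⟩ hi)⟩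
  · rintro ⟨i, rfl⟩
    refine ⟨⟨hP i, hJ i⟩, fun q ⟨hq, hJq⟩ hqi => ?_⟩
    obtain ⟨i', hi'⟩ := hcover q hq hJq
    exact hanti i' i (hi'.trans hqi) ▸ hi'

noncomputable def irreducibleComponentsQuotientEquiv (J : Ideal R) :
    irreducibleComponents (PrimeSpectrum (R ⧸ J)) ≃ J.minimalPrimes :=
  (OrderDual.toDual.trans
      (_root_.minimalPrimes.equivIrreducibleComponents (R ⧸ J)).toEquiv.symm).trans
    ((Equiv.Set.image _ _ (comap_injective_of_surjective _ Quotient.mk_surjective)).trans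
      (Equiv.setCongr minimalPrimes_eq_comap.symm))

end Ideal

namespace MvPolynomial

variable {R σ : Type*} [CommRing R]

theorem span_X_image_eq_ker (s : Set σ) [DecidablePred (· ∈ s)] :
    Ideal.span (X '' s : Set (MvPolynomial σ R)) =
      RingHom.ker (aeval fun i => if i ∈ s then (0 : MvPolynomial σ R) else X i) := by
  set I := Ideal.span (X '' s : Set (MvPolynomial σ R))
  refine le_antisymm (Ideal.span_le.mpr ?_) fun f hf => ?_
  · rintro _ ⟨i, hi, rfl⟩
    simp [hi]
  · have hcomp : (Ideal.Quotient.mkₐ R I).comp (aeval fun i => if i ∈ s then 0 else X i) =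
        Ideal.Quotient.mkₐ R I := by
      refine algHom_ext fun i => ?_
      by_cases hi : i ∈ s
      · rw [AlgHom.comp_apply, aeval_X, if_pos hi, map_zero, Ideal.Quotient.mkₐ_eq_mk, eq_comm,
          Ideal.Quotient.eq_zero_iff_mem]
        exact Ideal.subset_span ⟨i, hi, rfl⟩
      · simp [hi]
    have hf' := AlgHom.congr_fun hcomp f
    rw [AlgHom.comp_apply, RingHom.mem_ker.mp hf, map_zero, Ideal.Quotient.mkₐ_eq_mk] at hf'
    exact Ideal.Quotient.eq_zero_iff_mem.mp hf'.symm

theorem isPrime_span_X_image [IsDomain R] (s : Set σ) :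
    (Ideal.span (X '' s : Set (MvPolynomial σ R))).IsPrime := by
  classical
  rw [span_X_image_eq_ker]
  exact RingHom.ker_isPrime _

theorem X_mem_span_X_image_iff [Nontrivial R] {s : Set σ} {v : σ} :
    (X v : MvPolynomial σ R) ∈ Ideal.span (X '' s) ↔ v ∈ s := by
  classical
  rw [span_X_image_eq_ker, RingHom.mem_ker]
  by_cases hv : v ∈ s <;> simp [hv, X_ne_zero]

end MvPolynomial

theorem iInf_split_succ_eq_iInf_fin {α : Type*} [CompleteLattice α] (m : ℕ) (f : ℕ → ℕ → α) :
    (⨅ (i : ℕ) (j : ℕ) (_ : 1 ≤ i) (_ : 1 ≤ j) (_ : i + j = m + 1), f i j) =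
      ⨅ i : Fin m, f (i + 1) (m - i) := by
  refine le_antisymm (le_iInf fun i => ?_) (le_iInf fun i => le_iInf fun j =>
    le_iInf fun hi => le_iInf fun hj => le_iInf fun hij => ?_)
  · exact iInf_le_of_le (i + 1) <| iInf_le_of_le (m - i) <| iInf_le_of_le (by omega) <|
      iInf_le_of_le (by omega) <| iInf_le _ (by omega)
  · refine iInf_le_of_le ⟨i - 1, by omega⟩ (le_of_eq ?_)
    congr 1 <;> simp only <;> omega

section NodeJet

variable (k : Type*) [CommRing k] (m : ℕ)

/-- The ideal `J` of the theorem (up to the proofs of the index bounds). -/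
noncomputable def nodeJetIdeal : Ideal (MvPolynomial (Fin 2 × Fin (m + 1)) k) :=
  Ideal.span
    ({X ((0 : Fin 2), (0 : Fin (m + 1))), X ((1 : Fin 2), (0 : Fin (m + 1)))} ∪
      {g | ∃ l : Fin (m + 1), g =
        ∑ a : Fin (l.val + 1),
          X ((0 : Fin 2), ⟨a, a.isLt.trans_le l.isLt⟩) *
          X ((1 : Fin 2), ⟨l - a, (l.val.sub_le a).trans_lt l.isLt⟩)})

noncomputable def nodeComponent (i j : ℕ) : Ideal (MvPolynomial (Fin 2 × Fin (m + 1)) k) :=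
  Ideal.span
    ({g | ∃ a : Fin (m + 1), a.val < i ∧ g = X ((0 : Fin 2), a)} ∪
      {g | ∃ b : Fin (m + 1), b.val < j ∧ g = X ((1 : Fin 2), b)})

/-- `jetVar k m 0 a` is `x_a` and `jetVar k m 1 b` is `y_b`, extended by zero to indices `> m`. -/
noncomputable def jetVar (c : Fin 2) (a : ℕ) : MvPolynomial (Fin 2 × Fin (m + 1)) k :=
  if h : a < m + 1 then X (c, ⟨a, h⟩) else 0

variable {k m}

theorem jetVar_coe (c : Fin 2) (a : Fin (m + 1)) : jetVar k m c a = X (c, a) := by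
  simp [jetVar, a.isLt]

theorem nodeJetIdeal_le_iff {I : Ideal (MvPolynomial (Fin 2 × Fin (m + 1)) k)} :
    nodeJetIdeal k m ≤ I ↔ jetVar k m 0 0 ∈ I ∧ jetVar k m 1 0 ∈ I ∧
      ∀ l ≤ m, ∑ a ∈ Finset.range (l + 1), jetVar k m 0 a * jetVar k m 1 (l - a) ∈ I := by
  simp only [nodeJetIdeal, Ideal.span_le, Set.union_subset_iff, Set.insert_subset_iff,
    Set.singleton_subset_iff, Set.ofPred_subset, forall_exists_index, ← jetVar_coe, Fin.val_zero]
  refine and_assoc.trans <|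
    and_congr_right' <| and_congr_right' ⟨fun h l hl => ?_, fun h _ l hg => ?_⟩
  · have := h _ ⟨l, by omega⟩ rfl
    rwa [Fin.sum_univ_eq_sum_range (fun a => jetVar k m 0 a * jetVar k m 1 (l - a))] at this
  · rw [hg, Fin.sum_univ_eq_sum_range (fun a => jetVar k m 0 a * jetVar k m 1 (l - a))]
    exact h l (by omega)

theorem jetVar_zero_mem_nodeComponent {i j a : ℕ} (ha : a < i) :
    jetVar k m 0 a ∈ nodeComponent k m i j := by
  unfold jetVar
  split_ifs with h
  exacts [Ideal.subset_span (Or.inl ⟨⟨a, h⟩, ha, rfl⟩), zero_mem _]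

theorem jetVar_one_mem_nodeComponent {i j b : ℕ} (hb : b < j) :
    jetVar k m 1 b ∈ nodeComponent k m i j := by
  unfold jetVar
  split_ifs with h
  exacts [Ideal.subset_span (Or.inr ⟨⟨b, h⟩, hb, rfl⟩), zero_mem _]

theorem nodeComponent_le {i j : ℕ} {q : Ideal (MvPolynomial (Fin 2 × Fin (m + 1)) k)}
    (hx : ∀ a < i, jetVar k m 0 a ∈ q) (hy : ∀ b < j, jetVar k m 1 b ∈ q) :
    nodeComponent k m i j ≤ q := by
  refine Ideal.span_le.mpr ?_
  rintro _ (⟨a, ha, rfl⟩ | ⟨b, hb, rfl⟩)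
  · simpa [jetVar_coe] using hx a ha
  · simpa [jetVar_coe] using hy b hb

theorem nodeJetIdeal_le_nodeComponent {i j : ℕ} (hi : 1 ≤ i) (hj : 1 ≤ j) (hij : i + j = m + 1) :
    nodeJetIdeal k m ≤ nodeComponent k m i j := by
  refine nodeJetIdeal_le_iff.mpr ⟨jetVar_zero_mem_nodeComponent hi,
    jetVar_one_mem_nodeComponent hj, fun l hl => Ideal.sum_mem _ fun a _ => ?_⟩
  by_cases ha : a < i
  · exact Ideal.mul_mem_right _ _ (jetVar_zero_mem_nodeComponent ha)
  · exact Ideal.mul_mem_left _ _ (jetVar_one_mem_nodeComponent (by omega))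

theorem nodeComponent_eq_span_X_image (i j : ℕ) :
    nodeComponent k m i j =
      Ideal.span (X '' {v | v.1 = 0 ∧ v.2.val < i ∨ v.1 = 1 ∧ v.2.val < j}) := by
  unfold nodeComponent
  congr 1
  ext g
  constructor
  · rintro (⟨a, ha, rfl⟩ | ⟨b, hb, rfl⟩)
    exacts [⟨(0, a), Or.inl ⟨rfl, ha⟩, rfl⟩, ⟨(1, b), Or.inr ⟨rfl, hb⟩, rfl⟩]
  · rintro ⟨⟨c, a⟩, ⟨rfl, ha⟩ | ⟨rfl, ha⟩, rfl⟩
    exacts [Or.inl ⟨a, ha, rfl⟩, Or.inr ⟨a, ha, rfl⟩]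

theorem nodeComponent_isPrime [IsDomain k] (i j : ℕ) : (nodeComponent k m i j).IsPrime := by
  rw [nodeComponent_eq_span_X_image]
  exact isPrime_span_X_image _

theorem X_mem_nodeComponent_iff [Nontrivial k] {i j : ℕ} {c : Fin 2} {a : Fin (m + 1)} :
    X (c, a) ∈ nodeComponent k m i j ↔ c = 0 ∧ a.val < i ∨ c = 1 ∧ a.val < j := by
  rw [nodeComponent_eq_span_X_image, X_mem_span_X_image_iff]
  rfl

theorem eq_of_nodeComponent_le [Nontrivial k] {i j i' j' : ℕ} (h : i + j = i' + j')
    (hi' : i' ≤ m) (hj' : j' ≤ m) (hle : nodeComponent k m i j ≤ nodeComponent k m i' j') :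
    i = i' := by
  rcases lt_trichotomy i i' with hlt | heq | hgt
  · have hy := hle (X_mem_nodeComponent_iff.mpr (Or.inr ⟨rfl, show j' < j by omega⟩) :
      X ((1 : Fin 2), (⟨j', by omega⟩ : Fin (m + 1))) ∈ _)
    simp [X_mem_nodeComponent_iff] at hy
  · exact heq
  · have hx := hle (X_mem_nodeComponent_iff.mpr (Or.inl ⟨rfl, show i' < i from hgt⟩) :
      X ((0 : Fin 2), (⟨i', by omega⟩ : Fin (m + 1))) ∈ _)
    simp [X_mem_nodeComponent_iff] at hx

theorem exists_nodeComponent_le (hm : 1 ≤ m) {q : Ideal (MvPolynomial (Fin 2 × Fin (m + 1)) k)}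
    (hq : q.IsPrime) (hJq : nodeJetIdeal k m ≤ q) :
    ∃ i : Fin m, nodeComponent k m (i + 1) (m - i) ≤ q := by
  obtain ⟨hx0, hy0, hc⟩ := nodeJetIdeal_le_iff.mp hJq
  have hxy := Ideal.mul_mem_radical_of_sum_range_mul_mem hc
  rw [hq.radical] at hxy
  obtain ⟨i, him, hx, hy⟩ := hq.exists_forall_mem_of_mul_mem hm hx0 hy0 hxy
  refine ⟨⟨i, him⟩, nodeComponent_le (fun a ha => hx a ?_) fun b hb => hy b ?_⟩
  · dsimp only at ha
    omega
  · dsimp only at hb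
    omega

end NodeJet

/-- **Jet fibers of the node.**  Let `m ≥ 1` and consider the polynomial ring
`k[x₀,…,x_m, y₀,…,y_m]` in `2(m+1)` variables, realized as `MvPolynomial (Fin 2 × Fin (m+1)) k`
with `x_a = X (0, a)` and `y_b = X (1, b)`.  Let `J` be the ideal generated by `x₀`, `y₀` and
the polynomials `c_l = Σ_{a+b=l} x_a·y_b` for `0 ≤ l ≤ m` (the coefficients of `t^l` in
`X(t)·Y(t)`).  Then the radical of `J` equals the intersection over all `i, j ≥ 1` with
`i + j = m + 1` of the ideals `(x₀,…,x_{i−1}, y₀,…,y_{j−1})`; in particular the fiber of the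
`m`-th jet scheme of the node `xy = 0` over the origin has exactly `m` irreducible
components. -/
theorem node_jet_fiber_components (k : Type*) [Field k] (m : ℕ) (hm : 1 ≤ m)
    (J : Ideal (MvPolynomial (Fin 2 × Fin (m + 1)) k))
    (hJ : J = Ideal.span
      ({X ((0 : Fin 2), (0 : Fin (m + 1))), X ((1 : Fin 2), (0 : Fin (m + 1)))} ∪
        {g | ∃ l : Fin (m + 1), g =
          ∑ a : Fin (l.val + 1),
            X ((0 : Fin 2), (⟨a.val, by have := a.isLt; have := l.isLt; omega⟩ : Fin (m + 1))) *
            X ((1 : Fin 2),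
                (⟨l.val - a.val, by have := l.isLt; omega⟩ : Fin (m + 1)))})) :
    J.radical =
      (⨅ (i : ℕ) (j : ℕ) (_ : 1 ≤ i) (_ : 1 ≤ j) (_ : i + j = m + 1),
        Ideal.span
          ({g | ∃ a : Fin (m + 1), a.val < i ∧ g = X ((0 : Fin 2), a)} ∪
           {g | ∃ b : Fin (m + 1), b.val < j ∧ g = X ((1 : Fin 2), b)})) ∧
    (irreducibleComponents
        (PrimeSpectrum (MvPolynomial (Fin 2 × Fin (m + 1)) k ⧸ J))).Finite ∧
    (irreducibleComponents
        (PrimeSpectrum (MvPolynomial (Fin 2 × Fin (m + 1)) k ⧸ J))).ncard = m := by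
  obtain rfl : J = nodeJetIdeal k m := hJ
  set P : Fin m → Ideal (MvPolynomial (Fin 2 × Fin (m + 1)) k) :=
    fun i => nodeComponent k m (i + 1) (m - i)
  have hprime (i : Fin m) : (P i).IsPrime := nodeComponent_isPrime _ _
  have hJP (i : Fin m) : nodeJetIdeal k m ≤ P i :=
    nodeJetIdeal_le_nodeComponent (by omega) (by omega) (by omega)
  have hcover (q : Ideal _) (hq : q.IsPrime) (hJq : nodeJetIdeal k m ≤ q) : ∃ i, P i ≤ q :=
    exists_nodeComponent_le hm hq hJq
  have hanti (i i' : Fin m) (hle : P i ≤ P i') : i = i' :=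
    Fin.ext (by simpa using eq_of_nodeComponent_le (by omega) (by omega) (by omega) hle)
  have hinj : Function.Injective P := fun i i' h => hanti i i' h.le
  have hmin := Ideal.minimalPrimes_eq_range_of_forall_exists_le hprime hJP hcover
    fun i i' hle => congrArg P (hanti i i' hle)
  let e : irreducibleComponents (PrimeSpectrum (MvPolynomial (Fin 2 × Fin (m + 1)) k ⧸
      nodeJetIdeal k m)) ≃ Fin m :=
    (Ideal.irreducibleComponentsQuotientEquiv _).trans
      ((Equiv.setCongr hmin).trans (Equiv.ofInjective P hinj).symm)
  refine ⟨(Ideal.radical_eq_iInf_of_forall_exists_le hprime hJP hcover).trans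
    (iInf_split_succ_eq_iInf_fin m (nodeComponent k m)).symm,
    Set.finite_coe_iff.mp (Finite.of_equiv _ e.symm), ?_⟩
  rw [← Nat.card_coe_set_eq, Nat.card_congr e, Nat.card_fin]
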